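/- Let X₁,…,Xₙ be commuting unitary d × d matrices with Xᵢ² = 1 for all i, and let Y be a unitary matrix with Y² = 1 that commutes with X₁,…,X_{n−1}. Then there exists a unitary matrix Z with Z² = 1 that commutes with all X₁,…,Xₙ and satisfies ‖Z − Y‖ ≤ (1 + 1/(2√2))·‖XₙY − YXₙ‖ in the normalized Hilbert–Schmidt norm. -/

import Mathlib

/-!
Average `Y` over conjugation by the involution `A = Xₙ`: `Y' = (Y + AYA)/2` is Hermitian and
commutes with every `Xᵢ`, and `F = (AY - YA)/2` satisfies `Y - Y' = AF` and `F*F = 1 - Y'²`.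
The latter puts the spectrum of `Y'` in `[-1, 1]`, so `Z = sign Y'` (functional calculus, with
the sign of `0` taken to be `1`) is a Hermitian involution commuting with all `Xᵢ`, and the
eigenvalue-wise bound `(sign t - t)² ≤ 1 - t²` gives `‖Z - Y'‖ ≤ ‖F‖`. Hence
`‖Z - Y‖ ≤ ‖Z - Y'‖ + ‖AF‖ ≤ 2‖F‖ = ‖AY - YA‖`.
-/

open Matrix

noncomputable def normHS {n : Type*} [Fintype n] (A : Matrix n n ℂ) : ℝ :=
  Real.sqrt ((Matrix.trace (Aᴴ * A)).re / Fintype.card n)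

lemma IsSelfAdjoint.of_mem_unitary_of_mul_self_eq_one {M : Type*} [Monoid M] [StarMul M] {U : M}
    (hU : U ∈ unitary M) (h : U * U = 1) : IsSelfAdjoint U :=
  calc star U = star U * (U * U) := by rw [h, mul_one]
    _ = U := by rw [← mul_assoc, Unitary.star_mul_self_of_mem hU, one_mul]

lemma IsSelfAdjoint.mem_unitary_of_mul_self_eq_one {M : Type*} [Monoid M] [StarMul M] {U : M}
    (hU : IsSelfAdjoint U) (h : U * U = 1) : U ∈ unitary M :=
  Unitary.mem_iff.mpr ⟨by rw [hU.star_eq, h], by rw [hU.star_eq, h]⟩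

section ConjAvg

variable {R : Type*} [Ring R] [Algebra ℂ R] {A Y : R}

noncomputable def conjAvg (A Y : R) : R := (2⁻¹ : ℂ) • (Y + A * Y * A)

noncomputable def halfCommutator (A Y : R) : R := (2⁻¹ : ℂ) • (A * Y - Y * A)

lemma IsSelfAdjoint.conjAvg [StarRing R] [StarModule ℂ R] (hA : IsSelfAdjoint A)
    (hY : IsSelfAdjoint Y) : IsSelfAdjoint (conjAvg A Y) := by
  refine .smul (by simp [isSelfAdjoint_iff]) (hY.add ?_)
  rw [isSelfAdjoint_iff, star_mul, star_mul, hA.star_eq, hY.star_eq, mul_assoc]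

lemma Commute.conjAvg {B : R} (hA : Commute B A) (hY : Commute B Y) : Commute B (conjAvg A Y) :=
  (hY.add_right ((hA.mul_right hY).mul_right hA)).smul_right _

lemma commute_conjAvg_self (hA : A * A = 1) : Commute A (conjAvg A Y) := by
  unfold Commute SemiconjBy _root_.conjAvg
  rw [mul_smul_comm, smul_mul_assoc]
  simp only [mul_add, add_mul, ← mul_assoc, hA, one_mul]
  rw [mul_assoc, mul_assoc, hA, mul_one, add_comm]

lemma sub_conjAvg (hA : A * A = 1) : Y - conjAvg A Y = A * halfCommutator A Y := by
  unfold _root_.conjAvg halfCommutator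
  rw [mul_smul_comm, mul_sub, ← mul_assoc, hA, one_mul, ← mul_assoc]
  module

lemma star_halfCommutator_mul_self [StarRing R] [StarModule ℂ R] (hA : IsSelfAdjoint A)
    (hY : IsSelfAdjoint Y) (hAA : A * A = 1) (hYY : Y * Y = 1) :
    star (halfCommutator A Y) * halfCommutator A Y = 1 - conjAvg A Y * conjAvg A Y := by
  have hstar : star (halfCommutator A Y) = -halfCommutator A Y := by
    unfold halfCommutator
    rw [star_smul, star_sub, star_mul, star_mul, hA.star_eq, hY.star_eq]
    simp only [star_inv₀, star_ofNat]
    module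
  rw [hstar]
  unfold halfCommutator _root_.conjAvg
  have hAA' (x : R) : A * (A * x) = x := by rw [← mul_assoc, hAA, one_mul]
  have hYY' (x : R) : Y * (Y * x) = x := by rw [← mul_assoc, hYY, one_mul]
  simp only [neg_mul, smul_mul_assoc, mul_smul_comm, mul_sub, sub_mul, mul_add, add_mul, mul_assoc,
    hAA, hYY, hAA', hYY']
  module

end ConjAvg

section NormHS

variable {n : Type*} [Fintype n]

lemma re_trace_conjTranspose_mul_self (A : Matrix n n ℂ) :
    (Aᴴ * A).trace.re = ∑ i, ∑ j, ‖A i j‖ ^ 2 := by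
  simp only [trace, diag, mul_apply, conjTranspose_apply, Complex.re_sum, Complex.mul_re,
    Complex.star_def, Complex.conj_re, Complex.conj_im, Complex.sq_norm, Complex.normSq_apply]
  rw [Finset.sum_comm]
  simp only [neg_mul, sub_neg_eq_add]

attribute [local instance] Matrix.frobeniusSeminormedAddCommGroup Matrix.frobeniusNormedSpace in
lemma normHS_eq_frobenius_norm_div (A : Matrix n n ℂ) :
    normHS A = ‖A‖ / Real.sqrt (Fintype.card n) := by
  rw [normHS, frobenius_norm_def, re_trace_conjTranspose_mul_self, Real.sqrt_div (by positivity),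
    Real.sqrt_eq_rpow]
  norm_num

attribute [local instance] Matrix.frobeniusSeminormedAddCommGroup Matrix.frobeniusNormedSpace in
lemma normHS_sub_le (A B : Matrix n n ℂ) : normHS (A - B) ≤ normHS A + normHS B := by
  simp only [normHS_eq_frobenius_norm_div, ← add_div]
  gcongr
  exact norm_sub_le A B

attribute [local instance] Matrix.frobeniusSeminormedAddCommGroup Matrix.frobeniusNormedSpace in
lemma normHS_smul (c : ℂ) (A : Matrix n n ℂ) : normHS (c • A) = ‖c‖ * normHS A := by
  rw [normHS_eq_frobenius_norm_div, normHS_eq_frobenius_norm_div, norm_smul, mul_div_assoc]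

lemma normHS_mul_of_mem_unitary [DecidableEq n] {W : Matrix n n ℂ} (hW : W ∈ unitary _)
    (A : Matrix n n ℂ) : normHS (W * A) = normHS A := by
  have hWW : Wᴴ * W = 1 := Unitary.star_mul_self_of_mem hW
  rw [normHS, normHS, conjTranspose_mul, Matrix.mul_assoc, ← Matrix.mul_assoc Wᴴ, hWW,
    Matrix.one_mul]

open scoped MatrixOrder ComplexOrder in
lemma normHS_le_of_conjTranspose_mul_self_le {A B : Matrix n n ℂ} (h : Aᴴ * A ≤ Bᴴ * B) :
    normHS A ≤ normHS B := by
  have htr : 0 ≤ (Bᴴ * B - Aᴴ * A).trace := (Matrix.le_iff.mp h).trace_nonneg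
  rw [trace_sub, Complex.nonneg_iff, Complex.sub_re, sub_nonneg] at htr
  exact Real.sqrt_le_sqrt (div_le_div_of_nonneg_right htr.1 (Nat.cast_nonneg _))

end NormHS

section CFC

variable {R : Type*} [Ring R] [StarRing R] [Algebra ℝ R] [TopologicalSpace R]
  [ContinuousFunctionalCalculus ℝ R IsSelfAdjoint] {H : R}

lemma cfc_one_sub_mul_self (hH : IsSelfAdjoint H) :
    cfc (fun t : ℝ => 1 - t * t) H = 1 - H * H := by
  rw [cfc_sub (fun _ => 1) (fun t : ℝ => t * t), cfc_const_one ℝ H,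
    cfc_mul (fun t : ℝ => t) (fun t : ℝ => t), cfc_id' ℝ H]

lemma mul_self_le_one_of_mem_spectrum [PartialOrder R] [StarOrderedRing R]
    [NonnegSpectrumClass ℝ R] (hH : IsSelfAdjoint H) (h : 0 ≤ 1 - H * H) {t : ℝ}
    (ht : t ∈ spectrum ℝ H) : t * t ≤ 1 := by
  rw [← cfc_one_sub_mul_self hH, cfc_nonneg_iff _ H] at h
  linarith [h t ht]

end CFC

section Involution

variable {n : Type*} [Fintype n] [DecidableEq n]

open scoped MatrixOrder

lemma exists_involution_commute_normHS_sub_le {H F : Matrix n n ℂ} (hH : IsSelfAdjoint H)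
    (hF : Fᴴ * F = 1 - H * H) :
    ∃ Z : Matrix n n ℂ, IsSelfAdjoint Z ∧ Z * Z = 1 ∧ (∀ B, Commute B H → Commute B Z) ∧
      normHS (Z - H) ≤ normHS F := by
  set g : ℝ → ℝ := fun t => if 0 ≤ t then 1 else -1
  have hcont (f : ℝ → ℝ) : ContinuousOn f (spectrum ℝ H) := H.finite_real_spectrum.continuousOn f
  refine ⟨cfc g H, cfc_predicate g H, ?_, fun B hB => (hB.symm.cfc_real g).symm, ?_⟩
  · rw [← cfc_mul g g H (hcont g) (hcont g), ← cfc_const_one ℝ H]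
    refine cfc_congr fun t _ => ?_
    simp only [g]
    split_ifs <;> norm_num
  · have hsub : cfc g H - H = cfc (fun t => g t - t) H := by
      rw [cfc_sub g (fun t => t) H (hcont g), cfc_id' ℝ H]
    have hsq : (cfc g H - H)ᴴ * (cfc g H - H) = cfc (fun t => (g t - t) * (g t - t)) H := by
      rw [hsub, cfc_mul _ _ H (hcont _) (hcont _)]
      congr 1
      exact (cfc_predicate (fun t => g t - t) H).star_eq
    have hspec (t) (ht : t ∈ spectrum ℝ H) : t * t ≤ 1 :=
      mul_self_le_one_of_mem_spectrum hH (hF ▸ star_mul_self_nonneg F) ht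
    refine normHS_le_of_conjTranspose_mul_self_le ?_
    rw [hsq, hF, ← cfc_one_sub_mul_self hH]
    refine cfc_mono (fun t ht => ?_) (hcont _) (hcont _)
    have := hspec t ht
    -- `(sign t - t)² = 1 - 2|t| + t²`, and `t² ≤ |t|` on `[-1, 1]`
    simp only [g]
    split_ifs <;> nlinarith

end Involution

theorem stmt_3 (d n : ℕ) (hn : 0 < n) (X : Fin n → Matrix (Fin d) (Fin d) ℂ)
    (hXu : ∀ i, X i ∈ Matrix.unitaryGroup (Fin d) ℂ)
    (hXc : ∀ i j, Commute (X i) (X j))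
    (hXi : ∀ i, X i ^ 2 = 1)
    (Y : Matrix (Fin d) (Fin d) ℂ)
    (hYu : Y ∈ Matrix.unitaryGroup (Fin d) ℂ) (hYi : Y ^ 2 = 1)
    (hYc : ∀ i : Fin n, (i : ℕ) < n - 1 → Commute Y (X i)) :
    ∃ Z : Matrix (Fin d) (Fin d) ℂ, Z ∈ Matrix.unitaryGroup (Fin d) ℂ ∧
      Z ^ 2 = 1 ∧ (∀ i, Commute Z (X i)) ∧
      normHS (Z - Y) ≤ (1 + 1 / (2 * Real.sqrt 2)) *
        normHS (X ⟨n - 1, Nat.sub_lt hn one_pos⟩ * Y - Y * X ⟨n - 1, Nat.sub_lt hn one_pos⟩) := by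
  set k : Fin n := ⟨n - 1, Nat.sub_lt hn one_pos⟩
  have hXX (i) : X i * X i = 1 := by rw [← sq, hXi i]
  have hYY : Y * Y = 1 := by rw [← sq, hYi]
  have hXsa (i) := IsSelfAdjoint.of_mem_unitary_of_mul_self_eq_one (hXu i) (hXX i)
  have hYsa := IsSelfAdjoint.of_mem_unitary_of_mul_self_eq_one hYu hYY
  obtain ⟨Z, hZsa, hZZ, hZc, hZ⟩ := exists_involution_commute_normHS_sub_le
    ((hXsa k).conjAvg hYsa) (star_halfCommutator_mul_self (hXsa k) hYsa (hXX k) hYY)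
  refine ⟨Z, hZsa.mem_unitary_of_mul_self_eq_one hZZ, by rw [sq, hZZ],
    fun i => (hZc _ ?_).symm, ?_⟩
  · rcases eq_or_ne i k with rfl | hik
    · exact commute_conjAvg_self (hXX _)
    · have hi : (i : ℕ) ≠ n - 1 := fun h => hik (Fin.ext h)
      exact (hXc i k).conjAvg (hYc i (by omega)).symm
  calc normHS (Z - Y) = normHS ((Z - conjAvg (X k) Y) - (Y - conjAvg (X k) Y)) := by
        rw [sub_sub_sub_cancel_right]
    _ ≤ normHS (halfCommutator (X k) Y) + normHS (halfCommutator (X k) Y) := by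
        refine (normHS_sub_le _ _).trans (add_le_add hZ (le_of_eq ?_))
        rw [sub_conjAvg (hXX k), normHS_mul_of_mem_unitary (hXu k)]
    _ = normHS (X k * Y - Y * X k) := by
        rw [halfCommutator, normHS_smul]
        norm_num
        ring
    _ ≤ (1 + 1 / (2 * Real.sqrt 2)) * normHS (X k * Y - Y * X k) :=
        le_mul_of_one_le_left (Real.sqrt_nonneg _) (le_add_of_nonneg_right (by positivity))
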